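/- arXiv:2103.08302 — 2 statements merged into one kernel-verified Lean document; each statement's English description precedes it below -/
import Mathlib

section
/- Let C₁, …, Cₙ be integers. Then C₁ ≥ 0 ∨ ⋯ ∨ Cₙ ≥ 0 holds if and only if there exists a nonzero integer x such that for some i ∈ {1, …, n}, (4Cᵢ+2)x² + 1 is a perfect square. -/
/-!
For `d > 0` not a square, Pell's equation `m² - d x² = 1` has a solution with `x ≠ 0`, and
`4c + 2 ≡ 2 (mod 4)` is never a square. Conversely, `d x² + 1 = m² ≥ 0` with `x² ≥ 1` forces
`d ≥ -1`, which for `d = 4c + 2` means `c ≥ 0`.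
-/

theorem Int.not_isSquare_four_mul_add_two (c : ℤ) : ¬IsSquare (4 * c + 2) := by
  rintro ⟨r, hr⟩
  rcases Int.even_or_odd r with ⟨k, rfl⟩ | hodd
  · have : 4 * c + 2 = 4 * (k * k) := by rw [hr]; ring
    omega
  · have := Int.sq_mod_four_eq_one_of_odd hodd
    rw [sq, ← hr] at this
    omega

theorem Int.exists_mul_sq_add_one_eq_sq_of_nonneg {c : ℤ} (hc : 0 ≤ c) :
    ∃ x : ℤ, x ≠ 0 ∧ ∃ m : ℤ, (4 * c + 2) * x ^ 2 + 1 = m ^ 2 := by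
  obtain ⟨m, x, hpell, hx⟩ :=
    Pell.exists_of_not_isSquare (by omega) (Int.not_isSquare_four_mul_add_two c)
  exact ⟨x, hx, m, by linarith⟩

theorem Int.neg_one_le_of_mul_sq_add_one_eq_sq {d x m : ℤ} (hx : x ≠ 0)
    (h : d * x ^ 2 + 1 = m ^ 2) : -1 ≤ d := by
  by_contra! hd
  have hx2 : 1 ≤ x ^ 2 := by
    have : 0 < x ^ 2 := by positivity
    omega
  nlinarith [sq_nonneg m]

theorem exists_nonneg_iff_pell_disjunction (n : ℕ) (C : Fin n → ℤ) :
    (∃ i, 0 ≤ C i) ↔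
      ∃ x : ℤ, x ≠ 0 ∧ ∃ i : Fin n, ∃ m : ℤ, (4 * C i + 2) * x^2 + 1 = m^2 := by
  constructor
  · rintro ⟨i, hi⟩
    obtain ⟨x, hx, m, hm⟩ := Int.exists_mul_sq_add_one_eq_sq_of_nonneg hi
    exact ⟨x, hx, i, m, hm⟩
  · rintro ⟨x, hx, i, m, hm⟩
    have := Int.neg_one_le_of_mul_sq_add_one_eq_sq hx hm
    exact ⟨i, by omega⟩
end

section
/- For any integers A₁, …, A_k: all of A₁, …, A_k are perfect squares if and only if there exists an integer x with J_k(A₁, …, A_k, x) = 0, where J_k(x₁,…,x_k, x) = ∏_{ε₁,…,ε_k ∈ {±1}} (x + ε₁√x₁ + ε₂√x₂·X + ⋯ + ε_k√x_k·X^{k−1}) with X = 1 + Σ_{j=1}^k x_j². -/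
/-!
If some factor of `J_k` vanishes, then `x + ∑ c_j X^j = 0` with `c_j = ±√A_j`. If `A_{j₀}` were
not a square, a `ℚ`-embedding of `ℚ(c)` into `ℂ` sending `c_{j₀}` to `-c_{j₀}` would give a
second such relation `x + ∑ T_j X^j = 0` with `T_j = ±c_j` and `T_{j₀} = -c_{j₀}`. Subtracting,
`∑ ((c_j - T_j) / 2) X^j = 0`, where each "digit" is `0` or `c_j`, and `1 ≤ |c_j| ≤ A_j² < X`
when `c_j ≠ 0`; uniqueness of base-`X` expansions forces every digit to vanish, so `c_{j₀} = 0`.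
Conversely, if `A_j = m_j²` then `x = -∑ m_j X^j` is a root.
-/

/-- The Matiyasevich–Robinson polynomial `J_k`, evaluated via a choice of
complex square roots `s j` of the `A j` (the value is independent of the
choice of signs, and equals the value of the integer-coefficient polynomial
`J_k(A₁,…,A_k, x)`). -/
noncomputable def MRJ (k : ℕ) (A : Fin k → ℤ) (s : Fin k → ℂ) (x : ℂ) : ℂ :=
  ∏ ε : Fin k → Bool,
    (x + ∑ j : Fin k, (if ε j then (1 : ℂ) else -1) * s j *
      ((1 : ℂ) + ∑ l : Fin k, ((A l : ℂ)) ^ 2) ^ (j : ℕ))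

open Polynomial IntermediateField

theorem minpoly_eq_X_sq_sub_C {K L : Type*} [Field K] [Field L] [Algebra K L] {a : K} {α : L}
    (hα : α ^ 2 = algebraMap K L a) (ha : ¬IsSquare a) : minpoly K α = X ^ 2 - C a :=
  (minpoly.eq_of_irreducible_of_monic
    (X_pow_sub_C_irreducible_of_prime Nat.prime_two fun b hb => ha ⟨b, by rw [← hb, sq]⟩)
    (by simp [hα]) (monic_X_pow_sub_C _ two_ne_zero)).symm

theorem exists_sign_flip {K L ι : Type*} [Field K] [Field L] [Algebra K L] [IsAlgClosed L]
    [Fintype ι] {a : ι → K} {c : ι → L} (hc : ∀ j, c j ^ 2 = algebraMap K L (a j)) {j₀ : ι}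
    (ha : ¬IsSquare (a j₀)) :
    ∃ T : ι → L, (∀ j, T j = c j ∨ T j = -c j) ∧ T j₀ = -c j₀ ∧
      ∀ (b : ι → K) (q : K), ∑ j, c j * algebraMap K L (b j) = algebraMap K L q →
        ∑ j, T j * algebraMap K L (b j) = algebraMap K L q := by
  have hint : ∀ j, IsIntegral K (c j) := fun j =>
    ⟨X ^ 2 - C (a j), monic_X_pow_sub_C _ two_ne_zero, by simp [hc j]⟩
  have hmem : ∀ j, c j ∈ adjoin K (Set.range c) := fun j => subset_adjoin K _ ⟨j, rfl⟩
  obtain ⟨σ, hσ⟩ := exists_algHom_adjoin_of_splits_of_aeval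
    (by rintro _ ⟨j, rfl⟩; exact ⟨hint j, IsAlgClosed.splits _⟩) (hmem j₀) (y := -c j₀)
    (by simp [minpoly_eq_X_sq_sub_C (hc j₀) ha, hc j₀])
  let u j : adjoin K (Set.range c) := ⟨c j, hmem j⟩
  refine ⟨fun j => σ (u j), fun j => ?_, hσ, fun b q h => ?_⟩
  · have hu : u j ^ 2 = algebraMap K _ (a j) := Subtype.ext (hc j)
    refine sq_eq_sq_iff_eq_or_eq_neg.1 ?_
    rw [← map_pow, hu, AlgHom.commutes, hc j]
  · have : ∑ j, u j * algebraMap K _ (b j) = algebraMap K _ q := Subtype.ext (by simpa [u] using h)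
    simpa using congrArg σ this

theorem norm_sum_mul_pow_le {k : ℕ} {N : ℝ} (hN : 1 ≤ N) {e : Fin k → ℂ}
    (he : ∀ j, ‖e j‖ ≤ N - 1) : ‖∑ j, e j * (N : ℂ) ^ (j : ℕ)‖ ≤ N ^ k - 1 :=
  calc ‖∑ j, e j * (N : ℂ) ^ (j : ℕ)‖ ≤ ∑ j : Fin k, (N - 1) * N ^ (j : ℕ) := by
        refine (norm_sum_le _ _).trans (Finset.sum_le_sum fun j _ => ?_)
        rw [norm_mul, norm_pow, Complex.norm_real, Real.norm_of_nonneg (by linarith)]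
        exact mul_le_mul_of_nonneg_right (he j) (by positivity)
    _ = N ^ k - 1 := by
        rw [← Finset.mul_sum, Fin.sum_univ_eq_sum_range (N ^ ·), mul_comm, geom_sum_mul]

theorem eq_zero_of_sum_mul_pow_eq_zero {N : ℝ} : ∀ {k : ℕ} {e : Fin k → ℂ},
    (∀ j, e j = 0 ∨ 1 ≤ ‖e j‖ ∧ ‖e j‖ ≤ N - 1) → ∑ j, e j * (N : ℂ) ^ (j : ℕ) = 0 → e = 0
  | 0, _, _, _ => Subsingleton.elim _ _
  | k + 1, e, he, h => by
    rw [Fin.sum_univ_castSucc] at h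
    simp only [Fin.val_castSucc, Fin.val_last] at h
    by_cases hk : e (Fin.last k) = 0
    · have hinit := eq_zero_of_sum_mul_pow_eq_zero (fun j => he j.castSucc) (by simpa [hk] using h)
      funext j
      cases j using Fin.lastCases with
      | last => exact hk
      | cast i => exact congrFun hinit i
    · obtain ⟨h1, h2⟩ := (he _).resolve_left hk
      have hN : 1 ≤ N := by linarith
      have hup := norm_sum_mul_pow_le hN (e := fun j => e j.castSucc) fun j =>
        (he _).elim (fun h => by simp [h]; linarith) (·.2)
      rw [eq_neg_of_add_eq_zero_left h, norm_neg, norm_mul, norm_pow, Complex.norm_real,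
        Real.norm_of_nonneg (by linarith)] at hup
      nlinarith [pow_pos (by linarith : (0 : ℝ) < N) k]

theorem one_le_norm_and_norm_le_sq_of_sq_eq_intCast {c : ℂ} {n : ℤ} (hc : c ^ 2 = n)
    (h0 : c ≠ 0) : 1 ≤ ‖c‖ ∧ ‖c‖ ≤ (n : ℝ) ^ 2 := by
  have hn0 : n ≠ 0 := by rintro rfl; simp_all
  have hnorm : ‖c‖ ^ 2 = |(n : ℝ)| := by rw [← norm_pow, hc, Complex.norm_intCast]
  have hn1 : (1 : ℝ) ≤ |(n : ℝ)| := by exact_mod_cast Int.one_le_abs hn0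
  have h1 : 1 ≤ ‖c‖ := by nlinarith [norm_nonneg c]
  exact ⟨h1, by nlinarith [sq_abs (n : ℝ)]⟩

theorem eq_of_sum_mul_pow_eq {k : ℕ} {A : Fin k → ℤ} {c T : Fin k → ℂ}
    (hc : ∀ j, c j ^ 2 = A j) (hT : ∀ j, T j = c j ∨ T j = -c j)
    (h : ∑ j, c j * (1 + ∑ l, (A l : ℂ) ^ 2) ^ (j : ℕ) =
      ∑ j, T j * (1 + ∑ l, (A l : ℂ) ^ 2) ^ (j : ℕ)) : c = T := by
  set N : ℝ := 1 + ∑ l, (A l : ℝ) ^ 2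
  have hN : (1 + ∑ l, (A l : ℂ) ^ 2) = (N : ℂ) := by push_cast [N]; rfl
  have he : (fun j => (c j - T j) / 2) = 0 := by
    refine eq_zero_of_sum_mul_pow_eq_zero (N := N) (fun j => ?_) ?_
    · rcases hT j with h | h
      · simp [h]
      by_cases h0 : c j = 0
      · simp [h, h0]
      have hle : (A j : ℝ) ^ 2 ≤ ∑ l, (A l : ℝ) ^ 2 :=
        Finset.single_le_sum (fun l _ => sq_nonneg (A l : ℝ)) (Finset.mem_univ j)
      have := one_le_norm_and_norm_le_sq_of_sq_eq_intCast (hc j) h0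
      right
      rw [h, sub_neg_eq_add, ← two_mul, mul_div_cancel_left₀ _ two_ne_zero]
      exact ⟨this.1, by linarith [this.2]⟩
    · simp only [div_mul_eq_mul_div, sub_mul, ← Finset.sum_div, Finset.sum_sub_distrib, ← hN, h,
        sub_self, zero_div]
  funext j
  simpa [sub_eq_zero] using congrFun he j

theorem MRJ_eq_zero_iff {k : ℕ} {A : Fin k → ℤ} {s : Fin k → ℂ} {x : ℂ} :
    MRJ k A s x = 0 ↔ ∃ c : Fin k → ℂ, (∀ j, c j = s j ∨ c j = -s j) ∧
      x + ∑ j, c j * (1 + ∑ l, (A l : ℂ) ^ 2) ^ (j : ℕ) = 0 := by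
  simp only [MRJ, Finset.prod_eq_zero_iff, Finset.mem_univ, true_and]
  constructor
  · rintro ⟨ε, hε⟩
    refine ⟨fun j => (if ε j then 1 else -1) * s j, fun j => ?_, hε⟩
    rcases Bool.eq_false_or_eq_true (ε j) with h | h <;> simp [h]
  · rintro ⟨c, hc, hx⟩
    refine ⟨fun j => decide (c j = s j), ?_⟩
    convert hx using 4 with j
    by_cases hcs : c j = s j
    · simp [hcs]
    · simp only [hcs, decide_false, Bool.false_eq_true, if_false, neg_one_mul]
      exact ((hc j).resolve_left hcs).symm

theorem exists_sq_of_intCast_add_sum_mul_pow_eq_zero {k : ℕ} {A : Fin k → ℤ} {c : Fin k → ℂ}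
    (hc : ∀ j, c j ^ 2 = A j) {x : ℤ}
    (hx : x + ∑ j, c j * (1 + ∑ l, (A l : ℂ) ^ 2) ^ (j : ℕ) = 0) (j₀ : Fin k) :
    ∃ m : ℤ, A j₀ = m ^ 2 := by
  by_contra hns
  have hA : ¬IsSquare (A j₀ : ℚ) := by
    rw [Rat.isSquare_intCast_iff]
    rintro ⟨m, hm⟩
    exact hns ⟨m, by rw [hm, sq]⟩
  obtain ⟨T, hT, hTj₀, hTrel⟩ := exists_sign_flip (a := fun j => (A j : ℚ)) (c := c)
    (by simpa using hc) hA
  have hTx := hTrel (fun j => ((1 + ∑ l, A l ^ 2) ^ (j : ℕ) : ℤ)) (-x : ℤ) (by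
    simp only [map_intCast]
    push_cast
    linear_combination hx)
  simp only [map_intCast] at hTx
  push_cast at hTx
  have hcT := eq_of_sum_mul_pow_eq hc hT (by linear_combination hx - hTx)
  have hc₀ : c j₀ = 0 := by linear_combination (congrFun hcT j₀ + hTj₀) / 2
  exact hns ⟨0, by simpa [hc₀] using (hc j₀).symm⟩

theorem all_squares_iff_MRJ_root (k : ℕ) (A : Fin k → ℤ)
    (s : Fin k → ℂ) (hs : ∀ j, s j ^ 2 = (A j : ℂ)) :
    (∀ j, ∃ m : ℤ, A j = m ^ 2) ↔ ∃ x : ℤ, MRJ k A s (x : ℂ) = 0 := by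
  constructor
  · intro h
    choose m hm using h
    refine ⟨-∑ j, m j * (1 + ∑ l, A l ^ 2) ^ (j : ℕ), MRJ_eq_zero_iff.2
      ⟨fun j => m j, fun j => sq_eq_sq_iff_eq_or_eq_neg.1 ?_, by push_cast; ring⟩⟩
    rw [hs, hm]
    push_cast
    rfl
  · rintro ⟨x, hx⟩
    obtain ⟨c, hcs, hsum⟩ := MRJ_eq_zero_iff.1 hx
    exact exists_sq_of_intCast_add_sum_mul_pow_eq_zero
      (fun j => by rcases hcs j with h | h <;> simp [h, hs]) hsum
end
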